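/- arXiv:1701.05704 — 5 statements merged into one kernel-verified Lean document; each statement's English description precedes it below -/
import Mathlib

section
/- Let Ψ:[0,∞)→[0,∞) be a C¹ function satisfying Ψ'(t) ≤ -c·Ψ(t) for all t≥0, where c>0. Then for all t, √(-Ψ'(t)) ≤ -(2/√c)·(d/dt)√(Ψ(t)) wherever Ψ(t)>0; consequently ∫₀^∞ √(-Ψ'(t)) dt ≤ (2/√c)·√(Ψ(0)), provided Ψ(t)→0 as t→∞ and Ψ' ≤ 0. -/
/-!
Writing `Ψ' = -a` with `a ≥ c Ψ`, we get `√a · √(cΨ) ≤ a`, i.e.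
`√(-Ψ') ≤ -Ψ' / √(cΨ) = -(2/√c) (√Ψ)'`, so `√(-Ψ')` is dominated by the derivative of
`-(2/√c) √Ψ`, and its integral over `[0, b]` is at most
`(2/√c) (√Ψ(0) - √Ψ(b))`. Once `Ψ` vanishes it stays `0`, so there `Ψ' = 0` and the
right derivative of `√Ψ` is `0` as well: the domination holds for right derivatives at every
point, which is all the fundamental theorem of calculus needs.
-/

open Filter Set MeasureTheory Topology

lemma sqrt_neg_le_of_le_neg_mul {c p d : ℝ} (hc : 0 < c) (hp : 0 < p)
    (h : d ≤ -c * p) :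
    √(-d) ≤ -(2 / √c) * (d / (2 * √p)) := by
  have hcp : √(c * p) ≤ √(-d) := Real.sqrt_le_sqrt (by linarith)
  have hcp_pos : 0 < √(c * p) := Real.sqrt_pos.mpr (by positivity)
  have hsq : √(-d) * √(-d) = -d := Real.mul_self_sqrt (by nlinarith)
  calc √(-d) ≤ -d / √(c * p) := by
        rw [le_div_iff₀ hcp_pos]
        nlinarith [Real.sqrt_nonneg (-d)]
    _ = -(2 / √c) * (d / (2 * √p)) := by
        rw [Real.sqrt_mul hc.le]
        field_simp

lemma setIntegral_Ioi_le_of_intervalIntegral_le {f : ℝ → ℝ} {a M : ℝ} (hf : Continuous f)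
    (hf_nonneg : ∀ t, 0 ≤ f t) (h : ∀ b, a ≤ b → ∫ t in a..b, f t ≤ M) :
    ∫ t in Ioi a, f t ≤ M := by
  have h_eventually : ∀ᶠ b in atTop, ∫ t in a..b, f t ≤ M :=
    eventually_ge_atTop a |>.mono h
  have hint : IntegrableOn f (Ioi a) :=
    integrableOn_Ioi_of_intervalIntegral_norm_bounded M a (fun _ => hf.integrableOn_Ioc)
      tendsto_id <| h_eventually.mono fun b hb => by
        simpa only [id, Real.norm_of_nonneg (hf_nonneg _)] using hb
  exact le_of_tendsto (intervalIntegral_tendsto_integral_Ioi a hint tendsto_id) h_eventually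

section DifferentialInequality

variable {Ψ : ℝ → ℝ} {c : ℝ}

lemma antitoneOn_Ici_of_deriv_le_neg_mul (hc : 0 < c) (hΨ : Differentiable ℝ Ψ)
    (hpos : ∀ t, 0 ≤ t → 0 ≤ Ψ t) (hder : ∀ t, 0 ≤ t → deriv Ψ t ≤ -c * Ψ t) :
    AntitoneOn Ψ (Ici 0) :=
  antitoneOn_of_deriv_nonpos (convex_Ici 0) hΨ.continuous.continuousOn hΨ.differentiableOn
    fun t ht => (hder t (interior_subset ht)).trans <|
      by nlinarith [hpos t (interior_subset ht)]

lemma exists_hasDerivWithinAt_Ioi_sqrt (hc : 0 < c) (hΨ : Differentiable ℝ Ψ)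
    (hpos : ∀ t, 0 ≤ t → 0 ≤ Ψ t) (hder : ∀ t, 0 ≤ t → deriv Ψ t ≤ -c * Ψ t)
    {x : ℝ} (hx : 0 ≤ x) :
    ∃ d, HasDerivWithinAt (fun s => √(Ψ s)) d (Ioi x) x ∧ √(-deriv Ψ x) ≤ -(2 / √c) * d := by
  rcases (hpos x hx).lt_or_eq with hΨx | hΨx
  · exact ⟨_, ((hΨ x).hasDerivAt.sqrt hΨx.ne').hasDerivWithinAt,
      sqrt_neg_le_of_le_neg_mul hc hΨx (hder x hx)⟩
  · have hanti := antitoneOn_Ici_of_deriv_le_neg_mul hc hΨ hpos hder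
    have hzero : Ψ =ᶠ[𝓝[>] x] fun _ => 0 := by
      filter_upwards [self_mem_nhdsWithin] with s hs
      exact le_antisymm (hΨx ▸ hanti hx (hx.trans hs.le) hs.le) (hpos s (hx.trans hs.le))
    have hderiv_zero : deriv Ψ x = 0 :=
      (uniqueDiffWithinAt_Ioi x).eq_deriv _ (hΨ x).hasDerivAt.hasDerivWithinAt
        ((hasDerivWithinAt_const x _ 0).congr_of_eventuallyEq hzero hΨx.symm)
    refine ⟨0, (hasDerivWithinAt_const x _ 0).congr_of_eventuallyEq ?_ (by simp [← hΨx]), ?_⟩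
    · filter_upwards [hzero] with s hs
      simp [hs]
    · simp [hderiv_zero]

lemma intervalIntegral_sqrt_neg_deriv_le (hc : 0 < c) (hΨ : ContDiff ℝ 1 Ψ)
    (hpos : ∀ t, 0 ≤ t → 0 ≤ Ψ t) (hder : ∀ t, 0 ≤ t → deriv Ψ t ≤ -c * Ψ t)
    {b : ℝ} (hb : 0 ≤ b) :
    ∫ t in (0 : ℝ)..b, √(-deriv Ψ t) ≤ 2 / √c * (√(Ψ 0) - √(Ψ b)) := by
  have hdiff : Differentiable ℝ Ψ := hΨ.differentiable one_ne_zero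
  set g : ℝ → ℝ := fun s => √(Ψ s)
  have hg_right (x : ℝ) (hx : 0 ≤ x) :
      HasDerivWithinAt g (derivWithin g (Ioi x) x) (Ioi x) x ∧
        √(-deriv Ψ x) ≤ -(2 / √c) * derivWithin g (Ioi x) x := by
    obtain ⟨d, hd, hle⟩ := exists_hasDerivWithinAt_Ioi_sqrt hc hdiff hpos hder hx
    rw [hd.derivWithin (uniqueDiffWithinAt_Ioi x)]
    exact ⟨hd, hle⟩
  have hftc := intervalIntegral.integral_le_sub_of_hasDeriv_right_of_le hb
    (g := fun s => -(2 / √c) * g s) (g' := fun x => -(2 / √c) * derivWithin g (Ioi x) x)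
    (φ := fun t => √(-deriv Ψ t))
    (continuous_const.mul (hdiff.continuous.sqrt)).continuousOn
    (fun x hx => ((hg_right x hx.1.le).1).const_mul _)
    ((hΨ.continuous_deriv le_rfl).neg.sqrt.integrableOn_Icc)
    (fun x hx => (hg_right x hx.1.le).2)
  exact hftc.trans_eq (by ring)

end DifferentialInequality

theorem stmt_1_general (Ψ : ℝ → ℝ) (c : ℝ) (hc : 0 < c)
    (hΨ : ContDiff ℝ 1 Ψ)
    (hpos : ∀ t, 0 ≤ t → 0 ≤ Ψ t)
    (hder : ∀ t, 0 ≤ t → deriv Ψ t ≤ -c * Ψ t) :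
    (∀ t, 0 ≤ t → 0 < Ψ t →
      Real.sqrt (-deriv Ψ t) ≤
        -(2 / Real.sqrt c) * deriv (fun s => Real.sqrt (Ψ s)) t) ∧
    ∫ t in Ioi (0 : ℝ), Real.sqrt (-deriv Ψ t) ≤
      (2 / Real.sqrt c) * Real.sqrt (Ψ 0) := by
  refine ⟨fun t ht hΨt => ?_, ?_⟩
  · rw [((hΨ.differentiable one_ne_zero t).hasDerivAt.sqrt hΨt.ne').deriv]
    exact sqrt_neg_le_of_le_neg_mul hc hΨt (hder t ht)
  · refine setIntegral_Ioi_le_of_intervalIntegral_le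
      (hΨ.continuous_deriv le_rfl).neg.sqrt (fun _ => Real.sqrt_nonneg _) fun b hb => ?_
    calc ∫ t in (0 : ℝ)..b, √(-deriv Ψ t)
        ≤ 2 / √c * (√(Ψ 0) - √(Ψ b)) := intervalIntegral_sqrt_neg_deriv_le hc hΨ hpos hder hb
      _ ≤ 2 / √c * √(Ψ 0) := by
        gcongr
        exact sub_le_self _ (Real.sqrt_nonneg _)

/-- Key estimate in deducing the Talagrand inequality from the log-Sobolev
inequality: if `Ψ ≥ 0` is `C¹`, nonincreasing (`Ψ' ≤ 0`), satisfies
`Ψ' ≤ -c Ψ` with `c > 0` and `Ψ(t) → 0` as `t → ∞`, then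
`√(-Ψ'(t)) ≤ -(2/√c) (√Ψ)'(t)` wherever `Ψ(t) > 0`, and
`∫₀^∞ √(-Ψ'(t)) dt ≤ (2/√c) √(Ψ(0))`. -/
theorem stmt_1 (Ψ : ℝ → ℝ) (c : ℝ) (hc : 0 < c)
    (hΨ : ContDiff ℝ 1 Ψ)
    (hpos : ∀ t, 0 ≤ t → 0 ≤ Ψ t)
    (hder : ∀ t, 0 ≤ t → deriv Ψ t ≤ -c * Ψ t)
    (hdec : ∀ t, 0 ≤ t → deriv Ψ t ≤ 0)
    (hlim : Tendsto Ψ atTop (nhds 0)) :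
    (∀ t, 0 ≤ t → 0 < Ψ t →
      Real.sqrt (-deriv Ψ t) ≤
        -(2 / Real.sqrt c) * deriv (fun s => Real.sqrt (Ψ s)) t) ∧
    ∫ t in Ioi (0 : ℝ), Real.sqrt (-deriv Ψ t) ≤
      (2 / Real.sqrt c) * Real.sqrt (Ψ 0) :=
  stmt_1_general Ψ c hc hΨ hpos hder
end

section
/- Let N > 2 and p = 2N/(N-2). If for all k ∈ ℤ, (2^{2k}m_{k+1})^{(N+2)/2} ≤ (2^{2k}m_k + e_k)^{N/2}·(2^{2k}m_k²) with m_k ≥ m_{k+1} ≥ 0 and e_k ≥ 0, then (Σ_k 2^{pk}m_k)^{(N-2)/(N+2)} ≤ 2^p·(Σ_k {2^{2k}m_k + e_k})^{N/(N+2)}, where the sums are assumed finite. -/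
open Set

/-- Per-`k` rearranged estimate. -/
lemma stmt_8_key (N : ℝ) (hN : 2 < N) (p : ℝ) (hp : p = 2 * N / (N - 2))
    (m e : ℤ → ℝ) (hm0 : ∀ k, 0 ≤ m k) (he0 : ∀ k, 0 ≤ e k)
    (hineq : ∀ k : ℤ,
      ((2 : ℝ) ^ (2 * (k : ℝ)) * m (k + 1)) ^ ((N + 2) / 2) ≤
        ((2 : ℝ) ^ (2 * (k : ℝ)) * m k + e k) ^ (N / 2) *
          ((2 : ℝ) ^ (2 * (k : ℝ)) * (m k) ^ 2)) (k : ℤ) :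
    (2 : ℝ) ^ (p * ((k : ℝ) + 1)) * m (k + 1) ≤
      2 ^ p * ((2 : ℝ) ^ (2 * (k : ℝ)) * m k + e k) ^ (N / (N + 2)) *
        ((2 : ℝ) ^ (p * (k : ℝ)) * m k) ^ (4 / (N + 2)) := by
  have hN2 : (0:ℝ) < N + 2 := by linarith
  have hN2' : N + 2 ≠ 0 := ne_of_gt hN2
  have hNm2 : N - 2 ≠ 0 := by intro h; nlinarith
  set a : ℝ := (2 : ℝ) ^ (2 * (k : ℝ)) * m k + e k with ha
  have ha0 : 0 ≤ a := by have := hm0 k; have := he0 k; positivity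
  have hc2 : (0:ℝ) < (2 : ℝ) ^ (2 * (k : ℝ)) := by positivity
  have h0 : (0:ℝ) ≤ (2 : ℝ) ^ (2 * (k : ℝ)) * m (k + 1) := by
    have := hm0 (k+1); positivity
  have h1 : (2 : ℝ) ^ (2 * (k : ℝ)) * m (k + 1) ≤
      (a ^ (N / 2) * ((2 : ℝ) ^ (2 * (k : ℝ)) * (m k) ^ 2)) ^ (2 / (N + 2)) := by
    have hmono := Real.rpow_le_rpow (Real.rpow_nonneg h0 _) (hineq k)
      (show (0:ℝ) ≤ 2 / (N + 2) from div_nonneg (by norm_num) hN2.le)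
    rwa [← Real.rpow_mul h0,
      show (N + 2) / 2 * (2 / (N + 2)) = 1 by field_simp, Real.rpow_one] at hmono
  have h2 : (2 : ℝ) ^ (p * ((k : ℝ) + 1)) * m (k + 1) =
      (2 : ℝ) ^ (p * ((k : ℝ) + 1) - 2 * (k : ℝ)) * ((2 : ℝ) ^ (2 * (k : ℝ)) * m (k + 1)) := by
    rw [← mul_assoc, ← Real.rpow_add two_pos]; ring_nf
  rw [h2]
  calc (2 : ℝ) ^ (p * ((k : ℝ) + 1) - 2 * (k : ℝ)) * ((2 : ℝ) ^ (2 * (k : ℝ)) * m (k + 1))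
      ≤ (2 : ℝ) ^ (p * ((k : ℝ) + 1) - 2 * (k : ℝ)) *
        (a ^ (N / 2) * ((2 : ℝ) ^ (2 * (k : ℝ)) * (m k) ^ 2)) ^ (2 / (N + 2)) := by
        apply mul_le_mul_of_nonneg_left h1 (by positivity)
    _ = 2 ^ p * a ^ (N / (N + 2)) * ((2 : ℝ) ^ (p * (k : ℝ)) * m k) ^ (4 / (N + 2)) := by
        rw [Real.mul_rpow (by positivity) (by positivity),
          Real.mul_rpow (le_of_lt hc2) (by positivity),
          Real.mul_rpow (by positivity) (hm0 k),
          ← Real.rpow_two,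
          ← Real.rpow_mul ha0, ← Real.rpow_mul (by norm_num : (0:ℝ) ≤ 2),
          ← Real.rpow_mul (by norm_num : (0:ℝ) ≤ 2),
          ← Real.rpow_mul (hm0 k)]
        rw [show N / 2 * (2 / (N + 2)) = N / (N + 2) by field_simp,
          show (2:ℝ) * (2 / (N + 2)) = 4 / (N + 2) by ring,
          show p * (k:ℝ) * (4 / (N + 2)) = 4 * p * (k:ℝ) / (N + 2) by ring]
        rw [show (2:ℝ) ^ (p * ((k:ℝ) + 1) - 2 * (k:ℝ)) * (a ^ (N / (N + 2)) *
              ((2:ℝ) ^ (2 * (k:ℝ) * (2 / (N + 2))) * m k ^ (4 / (N + 2)))) =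
            ((2:ℝ) ^ (p * ((k:ℝ) + 1) - 2 * (k:ℝ)) * (2:ℝ) ^ (2 * (k:ℝ) * (2 / (N + 2)))) *
              a ^ (N / (N + 2)) * m k ^ (4 / (N + 2)) by ring,
          ← Real.rpow_add two_pos,
          show p * ((k:ℝ) + 1) - 2 * (k:ℝ) + 2 * (k:ℝ) * (2 / (N + 2)) =
            p + 4 * p * (k:ℝ) / (N + 2) by rw [hp]; field_simp; ring,
          Real.rpow_add two_pos]
        ring

/-- Summation step of the derivation of the (non-sharp) Sobolev inequality
from the Nash inequality: if `m : ℤ → ℝ` is nonnegative nonincreasing,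
`e : ℤ → ℝ` nonnegative, the relevant sums are finite, and for every `k`
`(2^{2k} m_{k+1})^{(N+2)/2} ≤ (2^{2k} m_k + e_k)^{N/2} (2^{2k} m_k²)`,
then with `p = 2N/(N-2)`,
`(Σ_k 2^{pk} m_k)^{(N-2)/(N+2)} ≤ 2^p (Σ_k (2^{2k} m_k + e_k))^{N/(N+2)}`. -/
theorem stmt_8 (N : ℝ) (hN : 2 < N) (p : ℝ) (hp : p = 2 * N / (N - 2))
    (m e : ℤ → ℝ)
    (hm0 : ∀ k, 0 ≤ m k) (hmono : ∀ k, m (k + 1) ≤ m k)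
    (he0 : ∀ k, 0 ≤ e k)
    (hsum1 : Summable (fun k : ℤ => (2 : ℝ) ^ (p * (k : ℝ)) * m k))
    (hsum2 : Summable (fun k : ℤ => (2 : ℝ) ^ (2 * (k : ℝ)) * m k + e k))
    (hineq : ∀ k : ℤ,
      ((2 : ℝ) ^ (2 * (k : ℝ)) * m (k + 1)) ^ ((N + 2) / 2) ≤
        ((2 : ℝ) ^ (2 * (k : ℝ)) * m k + e k) ^ (N / 2) *
          ((2 : ℝ) ^ (2 * (k : ℝ)) * (m k) ^ 2)) :
    (∑' k : ℤ, (2 : ℝ) ^ (p * (k : ℝ)) * m k) ^ ((N - 2) / (N + 2)) ≤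
      (2 : ℝ) ^ p *
        (∑' k : ℤ, ((2 : ℝ) ^ (2 * (k : ℝ)) * m k + e k)) ^ (N / (N + 2)) := by
  have hN2 : (0:ℝ) < N + 2 := by linarith
  have hN2' : N + 2 ≠ 0 := ne_of_gt hN2
  have hN0 : N ≠ 0 := by intro h; rw [h] at hN; linarith
  have hNm2 : N - 2 ≠ 0 := by intro h; nlinarith
  set b : ℤ → ℝ := fun k => (2 : ℝ) ^ (p * (k : ℝ)) * m k with hb
  set a : ℤ → ℝ := fun k => (2 : ℝ) ^ (2 * (k : ℝ)) * m k + e k with ha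
  have hb0 : ∀ k, 0 ≤ b k := fun k => by have := hm0 k; positivity
  have ha0 : ∀ k, 0 ≤ a k := fun k => by have := hm0 k; have := he0 k; positivity
  set S : ℝ := ∑' k : ℤ, b k with hS
  set T : ℝ := ∑' k : ℤ, a k with hT
  have hS0 : 0 ≤ S := tsum_nonneg hb0
  have hT0 : 0 ≤ T := tsum_nonneg ha0
  -- bound on each b k
  have hble : ∀ k, b k ≤ S := fun k => Summable.le_tsum hsum1 k (fun j _ => hb0 j)
  -- summability of b^2
  have hbsq : Summable (fun k : ℤ => (b k) ^ (2:ℝ)) := by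
    apply Summable.of_nonneg_of_le (fun k => Real.rpow_nonneg (hb0 k) _)
      (fun k => ?_) (hsum1.mul_left S)
    rw [Real.rpow_two]
    calc b k ^ 2 = b k * b k := sq (b k)
      _ ≤ S * b k := mul_le_mul_of_nonneg_right (hble k) (hb0 k)
  -- Hölder
  have hconj : ((N + 2) / N).HolderConjugate ((N + 2) / 2) := by
    rw [Real.holderConjugate_iff]
    constructor
    · rw [lt_div_iff₀ (by linarith)]; linarith
    · field_simp
  have hFsum : Summable (fun k : ℤ => ((a k) ^ (N / (N + 2))) ^ ((N + 2) / N)) := by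
    apply hsum2.congr
    intro k
    rw [← Real.rpow_mul (ha0 k), show N / (N + 2) * ((N + 2) / N) = 1 by
      field_simp, Real.rpow_one]
  have hGsum : Summable (fun k : ℤ => ((b k) ^ (4 / (N + 2))) ^ ((N + 2) / 2)) := by
    apply hbsq.congr
    intro k
    rw [← Real.rpow_mul (hb0 k), show 4 / (N + 2) * ((N + 2) / 2) = 2 by field_simp; norm_num]
  obtain ⟨hg_summ, hHolder⟩ := Real.summable_and_inner_le_Lp_mul_Lq_tsum_of_nonneg hconj
    (fun k => Real.rpow_nonneg (ha0 k) _) (fun k => Real.rpow_nonneg (hb0 k) _)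
    hFsum hGsum
  -- simplify the Hölder RHS
  have hHolder' : ∑' k : ℤ, (a k) ^ (N / (N + 2)) * (b k) ^ (4 / (N + 2)) ≤
      T ^ (N / (N + 2)) * S ^ (4 / (N + 2)) := by
    refine hHolder.trans ?_
    have e1 : (∑' k : ℤ, ((a k) ^ (N / (N + 2))) ^ ((N + 2) / N)) = T := by
      rw [hT]; exact tsum_congr fun k => by
        rw [← Real.rpow_mul (ha0 k), show N / (N + 2) * ((N + 2) / N) = 1 by
          field_simp, Real.rpow_one]
    have e2 : (∑' k : ℤ, ((b k) ^ (4 / (N + 2))) ^ ((N + 2) / 2)) = ∑' k : ℤ, (b k) ^ (2:ℝ) := by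
      exact tsum_congr fun k => by
        rw [← Real.rpow_mul (hb0 k), show 4 / (N + 2) * ((N + 2) / 2) = 2 by field_simp; norm_num]
    rw [e1, e2, one_div_div, one_div_div]
    have hsq_le : (∑' k : ℤ, (b k) ^ (2:ℝ)) ≤ S ^ 2 := by
      calc (∑' k : ℤ, (b k) ^ (2:ℝ)) ≤ ∑' k : ℤ, S * b k := by
            apply Summable.tsum_le_tsum (fun k => ?_) hbsq (hsum1.mul_left S)
            rw [Real.rpow_two]
            calc b k ^ 2 = b k * b k := sq (b k)
              _ ≤ S * b k := mul_le_mul_of_nonneg_right (hble k) (hb0 k)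
        _ = S * S := by rw [tsum_mul_left]
        _ = S ^ 2 := (sq S).symm
    apply mul_le_mul_of_nonneg_left ?_ (Real.rpow_nonneg hT0 _)
    calc (∑' k : ℤ, (b k) ^ (2:ℝ)) ^ (2 / (N + 2))
        ≤ (S ^ 2) ^ (2 / (N + 2)) := by
          apply Real.rpow_le_rpow (tsum_nonneg fun k => Real.rpow_nonneg (hb0 k) _)
            hsq_le (div_nonneg (by norm_num) hN2.le)
      _ = S ^ (4 / (N + 2)) := by
          rw [← Real.rpow_two, ← Real.rpow_mul hS0,
            show (2:ℝ) * (2 / (N + 2)) = 4 / (N + 2) by ring]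
  -- reindex: S = ∑ b (k+1)
  have hreindex : S = ∑' k : ℤ, b (k + 1) := by
    rw [hS, ← (Equiv.addRight (1:ℤ)).tsum_eq b]
    rfl
  -- summability of translated b
  have hsum1' : Summable (fun k : ℤ => b (k + 1)) :=
    ((Equiv.addRight (1:ℤ)).summable_iff (f := b)).2 hsum1
  -- chain
  have hkey : ∀ k : ℤ, b (k + 1) ≤
      2 ^ p * ((a k) ^ (N / (N + 2)) * (b k) ^ (4 / (N + 2))) := by
    intro k
    have := stmt_8_key N hN p hp m e hm0 he0 hineq k
    rw [hb]
    simp only []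
    push_cast
    rw [← mul_assoc]
    exact this
  have hmain : S ≤ 2 ^ p * (T ^ (N / (N + 2)) * S ^ (4 / (N + 2))) := by
    calc S = ∑' k : ℤ, b (k + 1) := hreindex
      _ ≤ ∑' k : ℤ, 2 ^ p * ((a k) ^ (N / (N + 2)) * (b k) ^ (4 / (N + 2))) := by
          apply Summable.tsum_le_tsum hkey hsum1' (hg_summ.mul_left _)
      _ = 2 ^ p * ∑' k : ℤ, (a k) ^ (N / (N + 2)) * (b k) ^ (4 / (N + 2)) := tsum_mul_left
      _ ≤ 2 ^ p * (T ^ (N / (N + 2)) * S ^ (4 / (N + 2))) := by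
          apply mul_le_mul_of_nonneg_left hHolder' (by positivity)
  -- conclude
  rcases eq_or_lt_of_le hS0 with hS0' | hSpos
  · rw [← hS0', Real.zero_rpow (div_ne_zero hNm2 hN2')]
    exact mul_nonneg (by positivity) (Real.rpow_nonneg hT0 _)
  · have hdecomp : S = S ^ ((N - 2) / (N + 2)) * S ^ (4 / (N + 2)) := by
      rw [← Real.rpow_add hSpos, show (N - 2) / (N + 2) + 4 / (N + 2) = 1 by
        field_simp; ring, Real.rpow_one]
    have hpow : (0:ℝ) < S ^ (4 / (N + 2)) := Real.rpow_pos_of_pos hSpos _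
    apply le_of_mul_le_mul_right ?_ hpow
    calc S ^ ((N - 2) / (N + 2)) * S ^ (4 / (N + 2)) = S := hdecomp.symm
      _ ≤ 2 ^ p * (T ^ (N / (N + 2)) * S ^ (4 / (N + 2))) := hmain
      _ = (2 ^ p * T ^ (N / (N + 2))) * S ^ (4 / (N + 2)) := by ring
end

section
/- Let N > 1, K > 0. Suppose Φ':(0,∞)→(-∞,0] is locally Lipschitz satisfying the Riccati-type differential inequality (Φ')'(t) ≥ -2K·Φ'(t) + (2/N)·Φ'(t)² for a.e. t>0. Then the function t ↦ e^{-2Kt}·(1/N - K/Φ'(t)) is nondecreasing on any interval where Φ' < 0, and consequently -Φ'(t) ≤ KN·(e^{2Kt}(1 - KN/Φ'(0⁺)) - 1)^{-1} for all t > 0 (with Φ'(0⁺) < 0). -/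
/-!
Where `g` is Lipschitz and bounded away from `0`, `h t = e^{-2Kt} (1/N - K/g t)` is
absolutely continuous with a.e. derivative `e^{-2Kt} K g⁻² (g' + 2Kg - (2/N) g²) ≥ 0`,
hence nondecreasing.
As `-g s · h s ≥ K e^{-2Ks}`, this monotonicity keeps `g` away from `0` on `(0, t]` as soon as
`g t < 0`; then `1/N - K/g(0⁺) = h(0⁺) ≤ h t`, which rearranges to the bound on `-g t`.
-/

open Set Filter MeasureTheory Topology NNReal

theorem AbsolutelyContinuousOnInterval.le_of_ae_deriv_nonneg {f : ℝ → ℝ} {a b : ℝ}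
    (hf : AbsolutelyContinuousOnInterval f a b) (hab : a ≤ b)
    (hf' : ∀ᵐ x, x ∈ Ioo a b → 0 ≤ deriv f x) : f a ≤ f b := by
  have hint : 0 ≤ ∫ x in a..b, deriv f x := by
    refine intervalIntegral.integral_nonneg_of_ae_restrict hab ?_
    rw [← Measure.restrict_congr_set Ioo_ae_eq_Icc]
    exact (ae_restrict_iff' measurableSet_Ioo).2 hf'
  linarith [hf.integral_deriv_eq_sub]

noncomputable def riccatiQuotient (N K : ℝ) (g : ℝ → ℝ) (t : ℝ) : ℝ :=
  Real.exp (-2 * K * t) * (1 / N - K / g t)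

variable {N K : ℝ} {g : ℝ → ℝ}

theorem HasDerivAt.riccatiQuotient {g' t : ℝ} (hg : HasDerivAt g g' t) (ht : g t ≠ 0) :
    HasDerivAt (riccatiQuotient N K g)
      (Real.exp (-2 * K * t) * K / g t ^ 2 * (g' - (-2 * K * g t + 2 / N * g t ^ 2))) t := by
  have hexp :
      HasDerivAt (fun s => Real.exp (-2 * K * s)) (Real.exp (-2 * K * t) * (-2 * K)) t := by
    simpa using ((hasDerivAt_id t).const_mul (-2 * K)).exp
  have hquot : HasDerivAt (fun s => 1 / N - K / g s) (K * g' / g t ^ 2) t := by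
    simpa only [← div_eq_mul_inv, neg_div, mul_neg, neg_neg, mul_div_assoc] using
      ((hg.fun_inv ht).const_mul K).const_sub (1 / N)
  exact (hexp.mul hquot).congr_deriv (by field_simp; ring)

theorem absolutelyContinuousOnInterval_riccatiQuotient {a b : ℝ} {C : ℝ≥0}
    (hg : LipschitzOnWith C g (uIcc a b)) (hneg : ∀ t ∈ uIcc a b, g t < 0) :
    AbsolutelyContinuousOnInterval (riccatiQuotient N K g) a b := by
  have hexp : AbsolutelyContinuousOnInterval (fun t => Real.exp (-2 * K * t)) a b :=
    (by fun_prop : ContDiff ℝ 1 fun t => Real.exp (-2 * K * t)).contDiffOn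
      |>.absolutelyContinuousOnInterval
  have hφ : LocallyLipschitzOn (Iio 0) fun y : ℝ => 1 / N - K / y :=
    (contDiffOn_const.sub (contDiffOn_const.div contDiffOn_id fun y hy => hy.ne))
      |>.locallyLipschitzOn (convex_Iio 0)
  obtain ⟨Cφ, hCφ⟩ := (hφ.mono (image_subset_iff.2 hneg)).exists_lipschitzOnWith_of_compact
    (isCompact_uIcc.image_of_continuousOn hg.continuousOn)
  exact hexp.fun_mul (hCφ.comp hg (mapsTo_image g _)).absolutelyContinuousOnInterval

theorem riccatiQuotient_le_of_lipschitzOnWith (hK : 0 ≤ K) {a b : ℝ} (hab : a ≤ b) {C : ℝ≥0}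
    (hg : LipschitzOnWith C g (Icc a b)) (hneg : ∀ t ∈ Icc a b, g t < 0)
    (hric : ∀ᵐ t, t ∈ Ioo a b → -2 * K * g t + 2 / N * g t ^ 2 ≤ deriv g t) :
    riccatiQuotient N K g a ≤ riccatiQuotient N K g b := by
  rw [← uIcc_of_le hab] at hg hneg
  refine (absolutelyContinuousOnInterval_riccatiQuotient hg hneg).le_of_ae_deriv_nonneg hab ?_
  filter_upwards [hg.absolutelyContinuousOnInterval.ae_differentiableAt, hric]
    with t hdiff hrict ht
  have htab : t ∈ uIcc a b := uIcc_of_le hab ▸ Ioo_subset_Icc_self ht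
  rw [((hdiff htab).hasDerivAt.riccatiQuotient (hneg t htab).ne).deriv]
  exact mul_nonneg (by positivity) (sub_nonneg.2 (hrict ht))

theorem monotoneOn_riccatiQuotient (hK : 0 ≤ K) {U : Set ℝ} (hg : LocallyLipschitzOn U g)
    (hric : ∀ᵐ t, t ∈ U → -2 * K * g t + 2 / N * g t ^ 2 ≤ deriv g t)
    {I : Set ℝ} (hIU : I ⊆ U) (hI : I.OrdConnected) (hneg : ∀ t ∈ I, g t < 0) :
    MonotoneOn (riccatiQuotient N K g) I := by
  intro a ha b hb hab
  have hsub : Icc a b ⊆ I := hI.out ha hb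
  obtain ⟨C, hC⟩ := (hg.mono (hsub.trans hIU)).exists_lipschitzOnWith_of_compact isCompact_Icc
  refine riccatiQuotient_le_of_lipschitzOnWith hK hab hC (fun t ht => hneg t (hsub ht)) ?_
  filter_upwards [hric] with t hrict htab using hrict (hIU (hsub (Ioo_subset_Icc_self htab)))

theorem mul_exp_le_neg_mul_riccatiQuotient (hN : 0 < N) (hK : 0 ≤ K) {s t : ℝ} (hst : s ≤ t)
    (hs : g s < 0) (hle : riccatiQuotient N K g s ≤ riccatiQuotient N K g t) :
    K * Real.exp (-2 * K * t) ≤ -g s * riccatiQuotient N K g t := by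
  have hexp : Real.exp (-2 * K * t) ≤ Real.exp (-2 * K * s) := Real.exp_le_exp.2 (by nlinarith)
  have hquot : 0 ≤ -g s / N := div_nonneg (by linarith) hN.le
  calc K * Real.exp (-2 * K * t) ≤ Real.exp (-2 * K * s) * (-g s / N + K) := by
        nlinarith [Real.exp_pos (-2 * K * s)]
    _ = -g s * riccatiQuotient N K g s := by
        unfold riccatiQuotient
        field_simp [hs.ne]
        ring
    _ ≤ -g s * riccatiQuotient N K g t := mul_le_mul_of_nonneg_left hle (by linarith)

theorem neg_of_mem_Ioc_of_neg (hN : 0 < N) (hK : 0 < K) {a t : ℝ}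
    (hgnonpos : ∀ s ∈ Ioi a, g s ≤ 0) (hg : LocallyLipschitzOn (Ioi a) g)
    (hric : ∀ᵐ s, s ∈ Ioi a → -2 * K * g s + 2 / N * g s ^ 2 ≤ deriv g s) (hgt : g t < 0) :
    ∀ s ∈ Ioc a t, g s < 0 := by
  by_contra! ⟨s, hs, hgs⟩
  have hZ : IsCompact (Icc s t ∩ g ⁻¹' {0}) :=
    isCompact_Icc.of_isClosed_subset ((hg.continuousOn.mono fun r hr => hs.1.trans_le hr.1
      ).preimage_isClosed_of_isClosed isClosed_Icc isClosed_singleton) inter_subset_left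
  -- `z` is the last zero of `g` before `t`; monotonicity of `h` on `(z, t]` keeps `-g` away
  -- from `0` there, which contradicts `g z = 0` by continuity.
  set z := sSup (Icc s t ∩ g ⁻¹' {0})
  have hz : z ∈ Icc s t ∩ g ⁻¹' {0} :=
    hZ.sSup_mem ⟨s, ⟨le_rfl, hs.2⟩, le_antisymm (hgnonpos s hs.1) hgs⟩
  have hza : a < z := hs.1.trans_le hz.1.1
  have hzt : z < t := hz.1.2.lt_of_ne fun h => hgt.ne (h ▸ hz.2)
  have hneg : ∀ r ∈ Ioc z t, g r < 0 := fun r hr => (hgnonpos r (hza.trans hr.1)).lt_of_ne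
    fun h => hr.1.not_ge (le_csSup hZ.bddAbove ⟨⟨hz.1.1.trans hr.1.le, hr.2⟩, h⟩)
  have hmono := monotoneOn_riccatiQuotient hK.le hg hric (fun r hr => hza.trans hr.1)
    ordConnected_Ioc hneg
  have hlim : Tendsto (fun r => -g r * riccatiQuotient N K g t) (𝓝[>] z)
      (𝓝 (-g z * riccatiQuotient N K g t)) :=
    (((hg.continuousOn.continuousAt (Ioi_mem_nhds hza)).tendsto.mono_left
      nhdsWithin_le_nhds).neg).mul_const _
  have hbound : K * Real.exp (-2 * K * t) ≤ -g z * riccatiQuotient N K g t := by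
    refine ge_of_tendsto hlim ?_
    filter_upwards [Ioc_mem_nhdsGT hzt] with r hr
    exact mul_exp_le_neg_mul_riccatiQuotient hN hK.le hr.2 (hneg r hr)
      (hmono hr (right_mem_Ioc.2 hzt) hr.2)
  rw [hz.2, neg_zero, zero_mul] at hbound
  exact hbound.not_gt (by positivity)

theorem tendsto_riccatiQuotient {l : Filter ℝ} {x y : ℝ} (hl : l ≤ 𝓝 x) (hg : Tendsto g l (𝓝 y))
    (hy : y ≠ 0) :
    Tendsto (riccatiQuotient N K g) l (𝓝 (Real.exp (-2 * K * x) * (1 / N - K / y))) :=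
  (((by fun_prop : Continuous fun t => Real.exp (-2 * K * t)).tendsto x).mono_left hl).mul
    (tendsto_const_nhds.sub (tendsto_const_nhds.div hg hy))

theorem exp_mul_one_sub_div_sub_one_pos (hN : 0 < N) (hK : 0 < K) {t g0 : ℝ} (ht : 0 ≤ t)
    (hg0 : g0 < 0) :
    0 < Real.exp (2 * K * t) * (1 - K * N / g0) - 1 := by
  have hexp : 1 ≤ Real.exp (2 * K * t) := Real.one_le_exp (by positivity)
  have hKN : K * N / g0 < 0 := div_neg_of_pos_of_neg (by positivity) hg0
  nlinarith

theorem neg_le_of_le_riccatiQuotient (hN : 0 < N) (hK : 0 < K) {t g0 : ℝ} (ht : 0 ≤ t)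
    (hg0 : g0 < 0) (hgt : g t < 0) (hle : 1 / N - K / g0 ≤ riccatiQuotient N K g t) :
    -g t ≤ K * N * (Real.exp (2 * K * t) * (1 - K * N / g0) - 1)⁻¹ := by
  have hmul : Real.exp (2 * K * t) * (1 - K * N / g0) ≤ 1 - K * N / g t := by
    have hscaled :=
      mul_le_mul_of_nonneg_left hle (by positivity : 0 ≤ N * Real.exp (2 * K * t))
    rw [riccatiQuotient, show -2 * K * t = -(2 * K * t) by ring, Real.exp_neg] at hscaled
    have hlhs : Real.exp (2 * K * t) * (1 - K * N / g0)
        = N * Real.exp (2 * K * t) * (1 / N - K / g0) := by field_simp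
    have hrhs : 1 - K * N / g t
        = N * Real.exp (2 * K * t) * ((Real.exp (2 * K * t))⁻¹ * (1 / N - K / g t)) := by
      field_simp
    linarith
  rw [← div_eq_mul_inv, le_div_iff₀ (exp_mul_one_sub_div_sub_one_pos hN hK ht hg0)]
  have hcancel : -g t * (1 - K * N / g t) = -g t + K * N := by
    field_simp [hgt.ne]
    ring
  nlinarith [mul_le_mul_of_nonneg_left hmul (neg_nonneg.2 hgt.le)]

/-- Riccati comparison step in the proof of the logarithmic entropy-energy
inequality: if `g = Φ'` is nonpositive, locally Lipschitz on `(0,∞)`, and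
satisfies `g' ≥ -2K g + (2/N) g²` a.e. on `(0,∞)`, then
`t ↦ e^{-2Kt} (1/N - K/g(t))` is nondecreasing on any interval where `g < 0`,
and `-g(t) ≤ KN (e^{2Kt}(1 - KN/g(0⁺)) - 1)⁻¹` for all `t > 0`
(where `g(0⁺) < 0` is the right limit of `g` at `0`). -/
theorem stmt_12 (N K : ℝ) (hN : 1 < N) (hK : 0 < K)
    (g : ℝ → ℝ) (hgnonpos : ∀ t ∈ Ioi (0 : ℝ), g t ≤ 0)
    (hlip : LocallyLipschitzOn (Ioi (0 : ℝ)) g)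
    (hric : ∀ᵐ t ∂(volume.restrict (Ioi (0 : ℝ))),
      -2 * K * g t + (2 / N) * (g t) ^ 2 ≤ deriv g t)
    (g0 : ℝ) (hg0 : Tendsto g (nhdsWithin 0 (Ioi 0)) (nhds g0))
    (hg0neg : g0 < 0) :
    (∀ I : Set ℝ, I ⊆ Ioi (0 : ℝ) → I.OrdConnected →
      (∀ t ∈ I, g t < 0) →
      MonotoneOn (fun t => Real.exp (-2 * K * t) * (1 / N - K / g t)) I) ∧
    (∀ t > (0 : ℝ),
      -g t ≤ K * N * (Real.exp (2 * K * t) * (1 - K * N / g0) - 1)⁻¹) := by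
  have hN0 : 0 < N := one_pos.trans hN
  have hric' := (ae_restrict_iff' measurableSet_Ioi).1 hric
  have hmono : ∀ I ⊆ Ioi (0 : ℝ), I.OrdConnected → (∀ t ∈ I, g t < 0) →
      MonotoneOn (riccatiQuotient N K g) I :=
    fun _ hI hIc hneg => monotoneOn_riccatiQuotient hK.le hlip hric' hI hIc hneg
  refine ⟨hmono, fun t ht => ?_⟩
  rcases (hgnonpos t ht).lt_or_eq with hgt | hgt
  · have hneg := neg_of_mem_Ioc_of_neg hN0 hK hgnonpos hlip hric' hgt
    have hlim : Tendsto (riccatiQuotient N K g) (𝓝[>] 0) (𝓝 (1 / N - K / g0)) := by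
      simpa using tendsto_riccatiQuotient nhdsWithin_le_nhds hg0 hg0neg.ne
    have hle : 1 / N - K / g0 ≤ riccatiQuotient N K g t := by
      refine le_of_tendsto hlim ?_
      filter_upwards [Ioc_mem_nhdsGT ht] with s hs
      exact hmono _ (fun _ hr => hr.1) ordConnected_Ioc hneg hs (right_mem_Ioc.2 ht) hs.2
    exact neg_le_of_le_riccatiQuotient hN0 hK ht.le hg0neg hgt hle
  · rw [hgt, neg_zero]
    have hD := exp_mul_one_sub_div_sub_one_pos hN0 hK ht.le hg0neg
    exact mul_nonneg (by positivity) (inv_nonneg.2 hD.le)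
end

section
/- Let K>0, N>1, and suppose Φ:(0,∞)→ℝ is C¹ with Φ' ≤ 0 satisfying -Φ'(t) ≤ KN·(e^{2Kt}(1 - KN/Φ'(0⁺)) - 1)^{-1} for all t>0, where Φ'(0⁺) < 0. Then Φ(0⁺) - Φ(t) ≤ (N/2)·log(1 - (1-e^{-2Kt})·Φ'(0⁺)/(KN)) for all t > 0; in particular, if Φ(t) → 0 as t → ∞, then Φ(0⁺) ≤ (N/2)·log(1 - Φ'(0⁺)/(KN)). -/
open Set Filter Topology

/-!
Set `G(t) = (N/2) log(1 - (1 - e^{-2Kt}) d/(KN))`. A direct computation shows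
`G'(t) = KN (e^{2Kt}(1 - KN/d) - 1)⁻¹`, so the Riccati bound says `(Φ + G)' ≥ 0`: `Φ + G` is
nondecreasing on `(0, ∞)`. Since `G(0) = 0`, its limit at `0⁺` is `Φ(0⁺)`, which gives the bound
for each `t`; the second claim is the limit `t → ∞`, where `G(t) → (N/2) log(1 - d/(KN))`.
-/

theorem MonotoneOn.le_of_tendsto_nhdsGT {α β : Type*} [LinearOrder α] [TopologicalSpace α]
    [OrderTopology α] [DenselyOrdered α] [Preorder β] [TopologicalSpace β] [OrderClosedTopology β]
    {f : α → β} {a t : α} {L : β} (hf : MonotoneOn f (Ioi a))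
    (hlim : Tendsto f (𝓝[>] a) (𝓝 L)) (ht : a < t) : L ≤ f t := by
  have : (𝓝[>] a).NeBot := nhdsGT_neBot_of_exists_gt ⟨t, ht⟩
  refine le_of_tendsto hlim ?_
  filter_upwards [Ioo_mem_nhdsGT ht] with s hs
  exact hf hs.1 (hs.1.trans hs.2) hs.2.le

theorem sub_le_of_neg_deriv_le {a L t : ℝ} {f f' g g' : ℝ → ℝ}
    (hf : ∀ s ∈ Ioi a, HasDerivWithinAt f (f' s) (Ioi a) s)
    (hg : ∀ s ∈ Ioi a, HasDerivWithinAt g (g' s) (Ioi a) s)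
    (hle : ∀ s ∈ Ioi a, -f' s ≤ g' s)
    (hf_lim : Tendsto f (𝓝[>] a) (𝓝 L)) (hg_lim : Tendsto g (𝓝[>] a) (𝓝 0)) (ht : a < t) :
    L - f t ≤ g t := by
  have hmono : MonotoneOn (f + g) (Ioi a) := by
    refine monotoneOn_of_hasDerivWithinAt_nonneg (f' := f' + g') (convex_Ioi a)
      (fun s hs ↦ ((hf s hs).add (hg s hs)).continuousWithinAt) (fun s hs ↦ ?_) (fun s hs ↦ ?_)
    · rw [interior_Ioi] at hs
      exact ((hf s hs).add (hg s hs)).mono interior_subset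
    · rw [interior_Ioi] at hs
      simpa [neg_le_iff_add_nonneg, add_comm] using hle s hs
  have := hmono.le_of_tendsto_nhdsGT (add_zero L ▸ hf_lim.add hg_lim) ht
  simp only [Pi.add_apply] at this
  linarith

/-- `∫₀ᵗ KN (e^{2Ks}(1 - KN/d) - 1)⁻¹ ds`, in closed form. -/
noncomputable def riccatiIntegral (K N d t : ℝ) : ℝ :=
  N / 2 * Real.log (1 - (1 - Real.exp (-2 * K * t)) * d / (K * N))

section riccatiIntegral

variable {K N d t : ℝ}

theorem one_le_one_sub_one_sub_exp_mul_div (hK : 0 < K) (hN : 0 < N) (hd : d ≤ 0) (ht : 0 ≤ t) :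
    1 ≤ 1 - (1 - Real.exp (-2 * K * t)) * d / (K * N) := by
  have hexp : Real.exp (-2 * K * t) ≤ 1 := Real.exp_le_one_iff.mpr (by nlinarith)
  have : (1 - Real.exp (-2 * K * t)) * d / (K * N) ≤ 0 :=
    div_nonpos_of_nonpos_of_nonneg (mul_nonpos_of_nonneg_of_nonpos (by linarith) hd)
      (by positivity)
  linarith

theorem hasDerivAt_riccatiIntegral (hK : 0 < K) (hN : 0 < N) (hd : d < 0) (ht : 0 ≤ t) :
    HasDerivAt (riccatiIntegral K N d)
      (K * N * (Real.exp (2 * K * t) * (1 - K * N / d) - 1)⁻¹) t := by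
  have hE : HasDerivAt (fun s ↦ Real.exp (-2 * K * s)) (Real.exp (-2 * K * t) * (-2 * K)) t := by
    simpa using ((hasDerivAt_id t).const_mul (-2 * K)).exp
  have harg := ((((hasDerivAt_const t 1).sub hE).mul_const d).div_const (K * N)).const_sub 1
  have hpos := one_le_one_sub_one_sub_exp_mul_div hK hN hd.le ht
  refine ((harg.log (by simp only [Pi.sub_apply]; linarith)).const_mul (N / 2)).congr_deriv ?_
  have hE0 := Real.exp_pos (-2 * K * t)
  rw [show 2 * K * t = -(-2 * K * t) by ring, Real.exp_neg]
  simp only [Pi.sub_apply]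
  generalize Real.exp (-2 * K * t) = E at hE0 ⊢
  have hd0 : d ≠ 0 := hd.ne
  rw [show E⁻¹ * (1 - K * N / d) - 1 = -(K * N - d + d * E) / (E * d) by
    field_simp; ring]
  field_simp
  ring

theorem tendsto_riccatiIntegral_nhdsGT_zero (hK : 0 < K) (hN : 0 < N) (hd : d < 0) :
    Tendsto (riccatiIntegral K N d) (𝓝[>] 0) (𝓝 0) := by
  have h := (hasDerivAt_riccatiIntegral hK hN hd le_rfl).continuousAt.tendsto
  rw [show riccatiIntegral K N d 0 = 0 by simp [riccatiIntegral]] at h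
  exact tendsto_nhdsWithin_of_tendsto_nhds h

theorem tendsto_riccatiIntegral_atTop (hK : 0 < K) (hN : 0 < N) (hd : d < 0) :
    Tendsto (riccatiIntegral K N d) atTop (𝓝 (N / 2 * Real.log (1 - d / (K * N)))) := by
  have hexp : Tendsto (fun t ↦ Real.exp (-2 * K * t)) atTop (𝓝 0) :=
    Real.tendsto_exp_comp_nhds_zero.mpr
      ((tendsto_const_mul_atBot_of_neg (by linarith)).mpr tendsto_id)
  have harg : Tendsto (fun t ↦ 1 - (1 - Real.exp (-2 * K * t)) * d / (K * N)) atTop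
      (𝓝 (1 - d / (K * N))) := by
    simpa using (tendsto_const_nhds (x := (1 : ℝ))).sub
      (((tendsto_const_nhds (x := (1 : ℝ))).sub hexp).mul_const d |>.div_const (K * N))
  have hlim_pos : 0 < 1 - d / (K * N) := by
    have : d / (K * N) < 0 := div_neg_of_neg_of_pos hd (by positivity)
    linarith
  exact ((Real.continuousAt_log hlim_pos.ne').tendsto.comp harg).const_mul (N / 2)

end riccatiIntegral

theorem stmt_13_general (K N : ℝ) (hK : 0 < K) (hN : 1 < N)
    (Φ : ℝ → ℝ) (hΦ : ContDiffOn ℝ 1 Φ (Ioi 0))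
    (d : ℝ)
    (hdneg : d < 0)
    (hbound : ∀ t ∈ Ioi (0 : ℝ),
      -derivWithin Φ (Ioi 0) t ≤
        K * N * (Real.exp (2 * K * t) * (1 - K * N / d) - 1)⁻¹)
    (L₀ : ℝ) (hL₀ : Tendsto Φ (nhdsWithin 0 (Ioi 0)) (nhds L₀)) :
    (∀ t > (0 : ℝ),
      L₀ - Φ t ≤ (N / 2) *
        Real.log (1 - (1 - Real.exp (-2 * K * t)) * d / (K * N))) ∧
    (Tendsto Φ atTop (nhds 0) →
      L₀ ≤ (N / 2) * Real.log (1 - d / (K * N))) := by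
  have hN₀ : 0 < N := one_pos.trans hN
  have hfinite : ∀ t > (0 : ℝ), L₀ - Φ t ≤ riccatiIntegral K N d t := fun t ht ↦
    sub_le_of_neg_deriv_le
      (fun s hs ↦ (hΦ.differentiableOn one_ne_zero s hs).hasDerivWithinAt)
      (fun s hs ↦ (hasDerivAt_riccatiIntegral hK hN₀ hdneg (le_of_lt hs)).hasDerivWithinAt)
      hbound hL₀ (tendsto_riccatiIntegral_nhdsGT_zero hK hN₀ hdneg) ht
  refine ⟨hfinite, fun hΦ_top ↦ ?_⟩
  refine le_of_tendsto_of_tendsto (by simpa using tendsto_const_nhds.sub hΦ_top)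
    (tendsto_riccatiIntegral_atTop hK hN₀ hdneg) ?_
  filter_upwards [eventually_gt_atTop 0] with t ht using hfinite t ht

/-- Integration of the Riccati bound, completing the ODE argument for the
logarithmic entropy-energy inequality: if `Φ` is `C¹` on `(0,∞)` with
`Φ' ≤ 0`, `-Φ'(t) ≤ KN (e^{2Kt}(1 - KN/d) - 1)⁻¹` where `d = Φ'(0⁺) < 0`,
and `L₀ = Φ(0⁺)`, then `L₀ - Φ(t) ≤ (N/2) log(1 - (1-e^{-2Kt}) d/(KN))`
for all `t > 0`, and if `Φ(t) → 0` as `t → ∞` then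
`L₀ ≤ (N/2) log(1 - d/(KN))`. -/
theorem stmt_13 (K N : ℝ) (hK : 0 < K) (hN : 1 < N)
    (Φ : ℝ → ℝ) (hΦ : ContDiffOn ℝ 1 Φ (Ioi 0))
    (hder : ∀ t ∈ Ioi (0 : ℝ), derivWithin Φ (Ioi 0) t ≤ 0)
    (d : ℝ) (hd : Tendsto (derivWithin Φ (Ioi 0)) (nhdsWithin 0 (Ioi 0)) (nhds d))
    (hdneg : d < 0)
    (hbound : ∀ t ∈ Ioi (0 : ℝ),
      -derivWithin Φ (Ioi 0) t ≤
        K * N * (Real.exp (2 * K * t) * (1 - K * N / d) - 1)⁻¹)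
    (L₀ : ℝ) (hL₀ : Tendsto Φ (nhdsWithin 0 (Ioi 0)) (nhds L₀)) :
    (∀ t > (0 : ℝ),
      L₀ - Φ t ≤ (N / 2) *
        Real.log (1 - (1 - Real.exp (-2 * K * t)) * d / (K * N))) ∧
    (Tendsto Φ atTop (nhds 0) →
      L₀ ≤ (N / 2) * Real.log (1 - d / (K * N))) :=
  stmt_13_general K N hK hN Φ hΦ d hdneg hbound L₀ hL₀
end

section
/- Let a ∈ ℝ, N > 1, K > 0, and suppose real quantities G₂, D, Q, L satisfy the pointwise Bochner-type inequality G₂ + a·D + a²·Q² ≥ K·Q + (1/N)·(L² + 2a·Q·L + a²·Q²) for all values of a auxiliary real L (here Q ≥ 0). Then choosing a = 3/(2(N+2)) and eliminating L via the identity ∫L² = ∫(G₂ + (3/2)D + Q²) one obtains ((N-1)/N)·G₂' ≥ K·Q' + ((4N-1)(N-1))/(4N(N+2)²)·Q'' ≥ K·Q' in integrated form, where G₂', Q', Q'' denote the corresponding weighted integrals. -/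
open MeasureTheory

/-- Abstract algebraic skeleton of the proof of the logarithmic Sobolev
inequality (Theorem 4.2): given weighted quantities `G₂, D, Q, L` (standing
for `Γ₂(h)`, `D[F²(∇h)](∇h)`, `F²(∇h)`, `Δh` against the weight `e^h`)
satisfying the pointwise Bochner-type inequality with parameter
`a = 3/(2(N+2))`, together with the integration-by-parts identities
`∫L² = ∫(G₂ + (3/2)D + Q²)` and `∫QL = -∫(Q² + D)`, one obtains
`((N-1)/N) ∫G₂ ≥ K ∫Q + ((4N-1)(N-1))/(4N(N+2)²) ∫Q² ≥ K ∫Q`. -/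
theorem stmt_19 {X : Type*} [MeasurableSpace X] (μ : Measure X)
    (N K : ℝ) (hN : 1 < N) (hK : 0 < K)
    (G₂ D Q L : X → ℝ)
    (hQ : ∀ x, 0 ≤ Q x)
    (hiG : Integrable G₂ μ) (hiD : Integrable D μ) (hiQ : Integrable Q μ)
    (hiQ2 : Integrable (fun x => (Q x) ^ 2) μ)
    (hiL2 : Integrable (fun x => (L x) ^ 2) μ)
    (hiQL : Integrable (fun x => Q x * L x) μ)
    (hbochner : ∀ x,
      K * Q x + (1 / N) * ((L x) ^ 2 +
          2 * (3 / (2 * (N + 2))) * Q x * L x +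
          (3 / (2 * (N + 2))) ^ 2 * (Q x) ^ 2) ≤
        G₂ x + (3 / (2 * (N + 2))) * D x +
          (3 / (2 * (N + 2))) ^ 2 * (Q x) ^ 2)
    (hL2id : ∫ x, (L x) ^ 2 ∂μ =
      ∫ x, (G₂ x + (3 / 2) * D x + (Q x) ^ 2) ∂μ)
    (hQLid : ∫ x, Q x * L x ∂μ = -∫ x, ((Q x) ^ 2 + D x) ∂μ) :
    K * ∫ x, Q x ∂μ +
      (4 * N - 1) * (N - 1) / (4 * N * (N + 2) ^ 2) * ∫ x, (Q x) ^ 2 ∂μ ≤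
        (N - 1) / N * ∫ x, G₂ x ∂μ ∧
    K * ∫ x, Q x ∂μ ≤
      K * ∫ x, Q x ∂μ +
        (4 * N - 1) * (N - 1) / (4 * N * (N + 2) ^ 2) * ∫ x, (Q x) ^ 2 ∂μ := by
  have hNpos : (0:ℝ) < N := by linarith
  have hN2 : (0:ℝ) < N + 2 := by linarith
  set a : ℝ := 3 / (2 * (N + 2)) with ha
  -- restated pointwise inequality with flat structure
  have hb' : ∀ x, K * Q x + (1 / N) * (L x) ^ 2 + (2 * a / N) * (Q x * L x)
      + (a ^ 2 / N) * (Q x) ^ 2 ≤ G₂ x + a * D x + a ^ 2 * (Q x) ^ 2 := fun x =>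
    le_trans (le_of_eq (by ring)) (le_trans (hbochner x) (le_of_eq (by ring)))
  have i1 := hiQ.const_mul K
  have i2 := hiL2.const_mul (1 / N)
  have i3 := hiQL.const_mul (2 * a / N)
  have i4 := hiQ2.const_mul (a ^ 2 / N)
  have key : ∫ x, (K * Q x + (1 / N) * (L x) ^ 2 + (2 * a / N) * (Q x * L x)
      + (a ^ 2 / N) * (Q x) ^ 2) ∂μ ≤ ∫ x, (G₂ x + a * D x + a ^ 2 * (Q x) ^ 2) ∂μ :=
    integral_mono (((i1.add i2).add i3).add i4)
      ((hiG.add (hiD.const_mul a)).add (hiQ2.const_mul (a ^ 2))) hb'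
  have i12 : Integrable (fun x => K * Q x + 1 / N * (L x) ^ 2) μ := i1.add i2
  have i123 : Integrable (fun x => K * Q x + 1 / N * (L x) ^ 2
      + 2 * a / N * (Q x * L x)) μ := i12.add i3
  have j1 : Integrable (fun x => a * D x) μ := hiD.const_mul a
  have j12 : Integrable (fun x => G₂ x + a * D x) μ := hiG.add j1
  have k1 : Integrable (fun x => 3 / 2 * D x) μ := hiD.const_mul (3/2)
  have k12 : Integrable (fun x => G₂ x + 3 / 2 * D x) μ := hiG.add k1
  rw [integral_add i123 i4, integral_add i12 i3, integral_add i1 i2,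
    integral_const_mul, integral_const_mul, integral_const_mul, integral_const_mul,
    integral_add j12 (hiQ2.const_mul (a ^ 2)), integral_add hiG j1,
    integral_const_mul, integral_const_mul] at key
  rw [integral_add k12 hiQ2, integral_add hiG k1, integral_const_mul] at hL2id
  rw [integral_add hiQ2 hiD] at hQLid
  rw [hL2id, hQLid] at key
  set IG := ∫ x, G₂ x ∂μ
  set ID := ∫ x, D x ∂μ
  set IQ := ∫ x, Q x ∂μ
  set IQ2 := ∫ x, (Q x) ^ 2 ∂μ
  have hQ2nn : 0 ≤ IQ2 := integral_nonneg fun x => sq_nonneg _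
  have hcnn : 0 ≤ (4 * N - 1) * (N - 1) / (4 * N * (N + 2) ^ 2) :=
    div_nonneg (mul_nonneg (by linarith) (by linarith))
      (mul_nonneg (by linarith) (sq_nonneg _))
  constructor
  · have diff : (N - 1) / N * IG - (K * IQ + (4 * N - 1) * (N - 1) / (4 * N * (N + 2) ^ 2) * IQ2)
        = (IG + a * ID + a ^ 2 * IQ2)
          - (K * IQ + 1 / N * (IG + 3 / 2 * ID + IQ2) + 2 * a / N * -(IQ2 + ID)
            + a ^ 2 / N * IQ2) := by
      rw [ha]
      field_simp
      ring
    linarith [key, diff]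
  · nlinarith [mul_nonneg hcnn hQ2nn]
end
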